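/- arXiv:2001.01715 — 3 statements merged into one kernel-verified Lean document; each statement's English description precedes it below -/
import Mathlib

section
/- Let G=(V,E) be a supply graph and H=(V,D) a demand graph such that (V,D) is a forest. Let I be a set of leaves (degree-1 vertices) of the forest (V,D) that is an independent set in G (no edge of E has both endpoints in I), and let S₁ be the set of edges of D incident to a vertex of I. Then |C∩S₁| ≤ |C∩E| for every cycle C of G+H; that is, S₁ is a feasible NonNegativeCycles solution. -/
open scoped Classical

noncomputable section

/-- The edge set of a simple closed walk in the multigraph with endpoint map `ends`. -/
def IsCycle {V ε : Type} (ends : ε → Sym2 V) (C : Finset ε) : Prop :=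
  ∃ (n : ℕ) (v : Fin (n + 1) → V) (e : Fin (n + 1) → ε),
    Function.Injective v ∧ Function.Injective e ∧
    (∀ i, ends (e i) = s(v i, v (i + 1))) ∧
    C = Finset.image e Finset.univ

/-- The edge set of a simple (open) path. -/
def IsPath {V ε : Type} (ends : ε → Sym2 V) (P : Finset ε) : Prop :=
  ∃ (n : ℕ) (v : Fin (n + 1) → V) (e : Fin n → ε),
    Function.Injective v ∧ Function.Injective e ∧
    (∀ i : Fin n, ends (e i) = s(v i.castSucc, v i.succ)) ∧
    P = Finset.image e Finset.univ

/-- The cut `δ(U)`: edges with exactly one endpoint in `U`. -/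
def cutF {V ε : Type} [Fintype ε] (ends : ε → Sym2 V) (U : Set V) : Finset ε :=
  Finset.univ.filter (fun e => ∃ a b, ends e = s(a, b) ∧ a ∈ U ∧ b ∉ U)

/-- `U` is nonempty and induces a connected subgraph. -/
def ConnectedOn {V ε : Type} (ends : ε → Sym2 V) (U : Set V) : Prop :=
  U.Nonempty ∧ ∀ a ∈ U, ∀ b ∈ U,
    Relation.ReflTransGen (fun x y => x ∈ U ∧ y ∈ U ∧ ∃ e, ends e = s(x, y)) a b

/-- The multigraph is connected. -/
def MGConnected {V ε : Type} (ends : ε → Sym2 V) : Prop :=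
  ConnectedOn ends Set.univ

/-- `δ(U)` is a simple cut: both sides induce connected subgraphs. -/
def IsSimpleCut {V ε : Type} (ends : ε → Sym2 V) (U : Set V) : Prop :=
  ConnectedOn ends U ∧ ConnectedOn ends Uᶜ

/-- A `D`-cycle: a cycle containing exactly one demand edge. -/
def IsDCycle {V ε : Type} [DecidableEq ε] (ends : ε → Sym2 V) (Dem : Finset ε)
    (C : Finset ε) : Prop :=
  IsCycle ends C ∧ (C ∩ Dem).card = 1

/-- A `D`-cut: a simple cut containing exactly one demand edge. -/
def IsDCut {V ε : Type} [Fintype ε] [DecidableEq ε] (ends : ε → Sym2 V) (Dem : Finset ε)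
    (U : Set V) : Prop :=
  IsSimpleCut ends U ∧ (cutF ends U ∩ Dem).card = 1

/-- Planarity of a multigraph: there is a drawing in the plane with injective vertex
positions and arcs for the edges that are internally disjoint. -/
def IsPlanar {V ε : Type} (ends : ε → Sym2 V) : Prop :=
  ∃ (pos : V → ℝ × ℝ) (arc : ε → ℝ → ℝ × ℝ),
    Function.Injective pos ∧
    (∀ e, ContinuousOn (arc e) (Set.Icc 0 1)) ∧
    (∀ e a b, ends e = s(a, b) →
      (arc e 0 = pos a ∧ arc e 1 = pos b) ∨ (arc e 0 = pos b ∧ arc e 1 = pos a)) ∧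
    (∀ e, Set.InjOn (arc e) (Set.Ico 0 1)) ∧
    (∀ e f, e ≠ f → ∀ s ∈ Set.Ioo (0:ℝ) 1, ∀ t ∈ Set.Icc (0:ℝ) 1, arc e s ≠ arc f t) ∧
    (∀ e, ∀ s ∈ Set.Ioo (0:ℝ) 1, ∀ w, arc e s ≠ pos w)

/-- if `(V,D)` is a forest, `I` a set of leaves of the forest which is
independent in `G`, then the set `S₁` of demand edges incident to `I` is a feasible
`NonNegativeCycles` solution. -/
theorem stmt5 {V ε : Type} [Fintype V] [DecidableEq V] [Fintype ε] [DecidableEq ε]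
    (ends : ε → Sym2 V) (Dem : Finset ε)
    (hforest : ∀ C : Finset ε, C ⊆ Dem → ¬ IsCycle ends C)
    (I : Finset V)
    (hleaf : ∀ v ∈ I, (Dem.filter (fun e => v ∈ ends e)).card = 1)
    (hind : ∀ e, e ∉ Dem → ∀ a b : V, ends e = s(a, b) → ¬(a ∈ I ∧ b ∈ I))
    (S₁ : Finset ε) (hS₁ : S₁ = Dem.filter (fun e => ∃ v ∈ I, v ∈ ends e)) :
    ∀ C : Finset ε, IsCycle ends C → (C ∩ S₁).card ≤ (C \ Dem).card := by
  intro C hC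
  -- two demand edges cannot share a leaf vertex
  have htwo : ∀ w ∈ I, ∀ f g, f ∈ Dem → g ∈ Dem → w ∈ ends f → w ∈ ends g → f = g := by
    intro w hw f g hf hg hwf hwg
    by_contra hne
    have hsub : ({f, g} : Finset ε) ⊆ Dem.filter (fun e => w ∈ ends e) := by
      intro x hx
      simp only [Finset.mem_insert, Finset.mem_singleton] at hx
      rcases hx with rfl | rfl <;> simp [Finset.mem_filter, hf, hg, hwf, hwg]
    have h2 : ({f, g} : Finset ε).card = 2 := Finset.card_pair hne
    have := Finset.card_le_card hsub
    rw [h2, hleaf w hw] at this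
    omega
  obtain ⟨n, v, e, hv, he, hends, hCeq⟩ := hC
  rcases n with _ | m
  · -- single loop edge: C ⊆ Dem would contradict hforest, unless C ∩ S₁ = ∅
    by_cases hd : e 0 ∈ Dem
    · refine absurd ⟨0, v, e, hv, he, hends, hCeq⟩ (hforest C ?_)
      intro x hx
      rw [hCeq] at hx
      simp only [Finset.mem_image] at hx
      obtain ⟨i, _, rfl⟩ := hx
      have hi : i = 0 := Fin.fin_one_eq_zero i
      rwa [hi]
    · have : C ∩ S₁ = ∅ := by
        rw [Finset.eq_empty_iff_forall_notMem]
        intro x hx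
        rw [Finset.mem_inter, hCeq, hS₁, Finset.mem_filter] at hx
        obtain ⟨hx1, hx2, _⟩ := hx
        simp only [Finset.mem_image] at hx1
        obtain ⟨i, _, rfl⟩ := hx1
        have : i = 0 := Fin.fin_one_eq_zero i
        rw [this] at hx2; exact hd hx2
      simp [this]
  · -- n = m + 1, so at least two edges
    have hex : ∀ f ∈ C ∩ S₁, ∃ g, g ∈ C \ Dem ∧ ∃ w, w ∈ I ∧ w ∈ ends f ∧ w ∈ ends g := by
      intro f hf
      rw [Finset.mem_inter, hCeq, hS₁, Finset.mem_filter] at hf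
      obtain ⟨hfC, hfD, w, hwI, hwf⟩ := hf
      simp only [Finset.mem_image, Finset.mem_univ, true_and] at hfC
      obtain ⟨i, rfl⟩ := hfC
      have hmem : w = v i ∨ w = v (i + 1) := by
        have := hwf; rw [hends i, Sym2.mem_iff] at this; exact this
      -- choose the other edge index j
      have key : ∀ j : Fin (m + 2), j ≠ i → w ∈ ends (e j) →
          ∃ g, g ∈ C \ Dem ∧ ∃ w', w' ∈ I ∧ w' ∈ ends (e i) ∧ w' ∈ ends g := by
        intro j hji hwj
        refine ⟨e j, ?_, w, hwI, hwf, hwj⟩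
        rw [Finset.mem_sdiff, hCeq]
        constructor
        · simp only [Finset.mem_image]
          exact ⟨j, Finset.mem_univ j, rfl⟩
        · intro hgD
          exact hji (he (htwo w hwI (e j) (e i) hgD hfD hwj hwf))
      rcases hmem with rfl | rfl
      · refine key (i - 1) ?_ ?_
        · intro h
          have : i - 1 + 1 = i + 1 := by rw [h]
          rw [sub_add_cancel] at this
          exact one_ne_zero (left_eq_add.mp this)
        · rw [hends (i - 1), sub_add_cancel, Sym2.mem_iff]; right; rfl
      · refine key (i + 1) ?_ ?_
        · intro h; exact one_ne_zero (left_eq_add.mp h.symm)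
        · rw [hends (i + 1), Sym2.mem_iff]; left; rfl
    -- build the injection
    choose! g hg₁ hg₂ using hex
    apply Finset.card_le_card_of_injOn g (fun f hf => hg₁ f hf)
    intro f₁ hf₁ f₂ hf₂ heq
    simp only [Finset.coe_inter, Set.mem_inter_iff, Finset.mem_coe] at hf₁ hf₂
    have hf₁' : f₁ ∈ C ∩ S₁ := Finset.mem_inter.mpr hf₁
    have hf₂' : f₂ ∈ C ∩ S₁ := Finset.mem_inter.mpr hf₂
    obtain ⟨w₁, hw₁I, hw₁f, hw₁g⟩ := hg₂ f₁ hf₁'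
    obtain ⟨w₂, hw₂I, hw₂f, hw₂g⟩ := hg₂ f₂ hf₂'
    have hgD : g f₁ ∉ Dem := (Finset.mem_sdiff.mp (hg₁ f₁ hf₁')).2
    have hf₁D : f₁ ∈ Dem := (Finset.mem_filter.mp (hS₁ ▸ (Finset.mem_inter.mp hf₁').2)).1
    have hf₂D : f₂ ∈ Dem := (Finset.mem_filter.mp (hS₁ ▸ (Finset.mem_inter.mp hf₂').2)).1
    rw [heq] at hw₁g
    by_cases hww : w₁ = w₂
    · exact htwo w₁ hw₁I f₁ f₂ hf₁D hf₂D hw₁f (hww ▸ hw₂f)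
    · exfalso
      have : ends (g f₂) = s(w₁, w₂) :=
        (Sym2.mem_and_mem_iff hww).mp ⟨hw₁g, hw₂g⟩
      rw [heq] at hgD
      exact hind (g f₂) hgD w₁ w₂ this ⟨hw₁I, hw₂I⟩


end
end

section
/- Let G=(V,E) be a connected graph, J a join in G, and U₁,…,U_m (not necessarily distinct) vertex sets forming a laminar family such that |δ(U_i)∩J| = 1 for all i and every edge of G lies in at most two of the cuts δ(U_i) (counted with multiplicity). Then there exist vertex sets W₁,…,W_m forming a laminar family such that for every i, δ(W_i) is a J-cut (a simple cut containing exactly one edge of J) with δ(W_i) ⊆ δ(U_i); in particular, every edge of G lies in at most two of the cuts δ(W_i). -/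
open scoped Classical

noncomputable section

/-!
For the `J`-edge `uv` of `δ(Uᵢ)` (with `u ∈ Uᵢ`), let `Kᵢ` be the component of `G[Uᵢ]` containing
`u` and `Xᵢ` the component of `G - Kᵢ` containing `v`. Then `δ(Xᵢ) ⊆ δ(Kᵢ) ⊆ δ(Uᵢ)` still contains
`uv`, `G[Xᵢ]` is connected, and `G - Xᵢ` is connected because it consists of the connected set `Kᵢ`
together with the other components of `G - Kᵢ`, each of which is attached to `Kᵢ`.
Components of a laminar family are laminar, and for laminar connected `Kᵢ` the sets `Xᵢ` are
pairwise cross-free. Replacing each `Xᵢ` by its side avoiding a fixed vertex `r` turns a cross-free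
family into a laminar one without changing the cuts.
-/

section

open Relation

variable {V ε : Type} {ends : ε → Sym2 V}

section Components

variable (ends) in
def AdjIn (S : Set V) (x y : V) : Prop :=
  x ∈ S ∧ y ∈ S ∧ ∃ e, ends e = s(x, y)

theorem AdjIn.symm {S : Set V} {x y : V} (h : AdjIn ends S x y) : AdjIn ends S y x :=
  ⟨h.2.1, h.1, h.2.2.imp fun _ he => he.trans Sym2.eq_swap⟩

theorem AdjIn.mono {S T : Set V} (hST : S ⊆ T) {x y : V} (h : AdjIn ends S x y) :
    AdjIn ends T x y :=
  ⟨hST h.1, hST h.2.1, h.2.2⟩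

theorem reflTransGen_adjIn_symm {S : Set V} {x y : V} (h : ReflTransGen (AdjIn ends S) x y) :
    ReflTransGen (AdjIn ends S) y x := by
  induction h with
  | refl => exact .refl
  | tail _ hbc ih => exact ih.head hbc.symm

variable (ends) in
def component (S : Set V) (v : V) : Set V :=
  {y | ReflTransGen (AdjIn ends S) v y}

variable {S : Set V} {v : V}

theorem mem_component_self : v ∈ component ends S v :=
  ReflTransGen.refl

theorem component_subset (hv : v ∈ S) : component ends S v ⊆ S := by
  intro y hy
  rcases hy.cases_tail with rfl | ⟨_, _, hy⟩
  exacts [hv, hy.2.1]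

theorem reflTransGen_adjIn_component {y : V} (h : ReflTransGen (AdjIn ends S) v y) :
    ReflTransGen (AdjIn ends (component ends S v)) v y := by
  induction h with
  | refl => exact .refl
  | tail hvb hbc ih => exact ih.tail ⟨hvb, hvb.tail hbc, hbc.2.2⟩

theorem connectedOn_component (S : Set V) (v : V) : ConnectedOn ends (component ends S v) :=
  ⟨⟨v, mem_component_self⟩, fun _ ha _ hb =>
    (reflTransGen_adjIn_symm (reflTransGen_adjIn_component ha)).trans
      (reflTransGen_adjIn_component hb)⟩

theorem ConnectedOn.disjoint_or_subset_component {T : Set V} (hT : ConnectedOn ends T)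
    (hTS : T ⊆ S) (v : V) : Disjoint (component ends S v) T ∨ T ⊆ component ends S v := by
  refine or_iff_not_imp_left.2 fun h => ?_
  obtain ⟨y, hyC, hyT⟩ := Set.not_disjoint_iff.1 h
  exact fun b hb =>
    hyC.trans (ReflTransGen.mono (fun _ _ => AdjIn.mono hTS) _ _ (hT.2 y hyT b hb))

theorem MGConnected.connectedOn_compl_component_compl (hconn : MGConnected ends) {K : Set V}
    (hK : ConnectedOn ends K) (hv : v ∉ K) : ConnectedOn ends (component ends Kᶜ v)ᶜ := by
  set X := component ends Kᶜ v
  have hXK : X ⊆ Kᶜ := component_subset hv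
  have hKX : K ⊆ Xᶜ := fun x hx hxX => hXK hxX hx
  obtain ⟨u, hu⟩ := hK.1
  suffices reach : ∀ w ∉ X, ReflTransGen (AdjIn ends Xᶜ) w u from
    ⟨⟨u, hKX hu⟩, fun a ha b hb => (reach a ha).trans (reflTransGen_adjIn_symm (reach b hb))⟩
  intro w
  -- a walk from `w ∉ X` to `u` stays in `Kᶜ` until it enters `K`, so it never enters `X`
  induction hconn.2 w trivial u trivial using ReflTransGen.head_induction_on with
  | refl => exact fun _ => .refl
  | @head a c hac _ ih =>
    intro ha
    obtain ⟨-, -, e, he⟩ := hac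
    by_cases haK : a ∈ K
    · exact ReflTransGen.mono (fun _ _ => AdjIn.mono hKX) _ _ (hK.2 a haK u hu)
    · have hc : c ∉ X := fun hc => ha (hc.tail ⟨hXK hc, haK, e, he.trans Sym2.eq_swap⟩)
      exact .head ⟨ha, hc, e, he⟩ (ih hc)

end Components

section Cuts

variable [Fintype ε]

theorem mem_cutF {U : Set V} {e : ε} :
    e ∈ cutF ends U ↔ ∃ a b, ends e = s(a, b) ∧ a ∈ U ∧ b ∉ U := by
  simp [cutF]

theorem cutF_compl (U : Set V) : cutF ends Uᶜ = cutF ends U := by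
  ext e
  simp only [mem_cutF, Set.mem_compl_iff, not_not]
  constructor <;> exact fun ⟨a, b, he, ha, hb⟩ => ⟨b, a, he.trans Sym2.eq_swap, hb, ha⟩

theorem cutF_component_subset {S : Set V} {v : V} (hv : v ∈ S) :
    cutF ends (component ends S v) ⊆ cutF ends S := by
  intro e he
  obtain ⟨a, b, hab, ha, hb⟩ := mem_cutF.1 he
  have haS := component_subset hv ha
  exact mem_cutF.2 ⟨a, b, hab, haS, fun hbS => hb (ha.tail ⟨haS, hbS, e, hab⟩)⟩

end Cuts

section CrossFree

variable {A B : Set V}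

def Laminar (A B : Set V) : Prop :=
  Disjoint A B ∨ A ⊆ B ∨ B ⊆ A

def CrossFree (A B : Set V) : Prop :=
  A ⊆ B ∨ B ⊆ A ∨ Disjoint A B ∨ A ∪ B = Set.univ

theorem Laminar.symm (h : Laminar A B) : Laminar B A := by
  unfold Laminar at *
  rcases h with h | h | h
  exacts [Or.inl h.symm, Or.inr (Or.inr h), Or.inr (Or.inl h)]

theorem CrossFree.symm (h : CrossFree A B) : CrossFree B A := by
  unfold CrossFree at *
  rw [Set.union_comm]
  rcases h with h | h | h | h
  exacts [Or.inr (Or.inl h), Or.inl h, Or.inr (Or.inr (Or.inl h.symm)),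
    Or.inr (Or.inr (Or.inr h))]

theorem crossFree_compl_left_iff : CrossFree Aᶜ B ↔ CrossFree A B := by
  have h : Aᶜ ∪ B = Set.univ ↔ A ⊆ B := by rw [← Set.compl_subset_iff_union, compl_compl]
  unfold CrossFree
  rw [h, Set.compl_subset_iff_union, Set.subset_compl_iff_disjoint_left,
    Set.disjoint_compl_left_iff_subset]
  tauto

theorem crossFree_compl_right_iff : CrossFree A Bᶜ ↔ CrossFree A B :=
  ⟨fun h => (crossFree_compl_left_iff.1 h.symm).symm,
    fun h => (crossFree_compl_left_iff.2 h.symm).symm⟩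

theorem CrossFree.laminar {r : V} (h : CrossFree A B) (hA : r ∉ A) (hB : r ∉ B) :
    Laminar A B := by
  rcases h with h | h | h | h
  · exact Or.inr (Or.inl h)
  · exact Or.inr (Or.inr h)
  · exact Or.inl h
  · exact ((Set.eq_univ_iff_forall.1 h r).elim hA hB).elim

def sideWithout (r : V) (A : Set V) : Set V :=
  if r ∈ A then Aᶜ else A

theorem sideWithout_eq_or (r : V) (A : Set V) : sideWithout r A = Aᶜ ∨ sideWithout r A = A := by
  unfold sideWithout
  split_ifs
  exacts [Or.inl rfl, Or.inr rfl]

theorem notMem_sideWithout (r : V) (A : Set V) : r ∉ sideWithout r A := by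
  unfold sideWithout
  split_ifs with h
  exacts [not_not.2 h, h]

theorem CrossFree.sideWithout (h : CrossFree A B) (r : V) :
    CrossFree (sideWithout r A) (sideWithout r B) := by
  rcases sideWithout_eq_or r A with hA | hA <;> rcases sideWithout_eq_or r B with hB | hB <;>
    simpa only [hA, hB, crossFree_compl_left_iff, crossFree_compl_right_iff] using h

theorem cutF_sideWithout [Fintype ε] (r : V) (A : Set V) :
    cutF ends (sideWithout r A) = cutF ends A := by
  rcases sideWithout_eq_or r A with h | h <;> rw [h]
  exact cutF_compl A

theorem IsSimpleCut.sideWithout (h : IsSimpleCut ends A) (r : V) :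
    IsSimpleCut ends (sideWithout r A) := by
  rcases sideWithout_eq_or r A with hA | hA <;> rw [hA]
  exacts [⟨h.2, (compl_compl A).symm ▸ h.1⟩, h]

end CrossFree

section Shrink

variable {S T : Set V}

theorem laminar_component_of_subset (hST : S ⊆ T) {u : V} (hu : u ∈ S) (u' : V) :
    Laminar (component ends S u) (component ends T u') :=
  ((connectedOn_component S u).disjoint_or_subset_component ((component_subset hu).trans hST)
    u').imp (fun h => h.symm) Or.inl

theorem Laminar.component (h : Laminar S T) {u u' : V} (hu : u ∈ S) (hu' : u' ∈ T) :
    Laminar (component ends S u) (component ends T u') := by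
  rcases h with h | h | h
  · exact Or.inl (h.mono (component_subset hu) (component_subset hu'))
  · exact laminar_component_of_subset h hu u'
  · exact (laminar_component_of_subset h hu' u).symm

theorem crossFree_component_of_subset {X : Set V} (hX : ConnectedOn ends X) (hXS : X ⊆ S)
    (v : V) : CrossFree (component ends S v) X := by
  rcases hX.disjoint_or_subset_component hXS v with h | h
  exacts [Or.inr (Or.inr (Or.inl h)), Or.inr (Or.inl h)]

variable {K₁ K₂ : Set V} {v₁ v₂ : V}

theorem crossFree_component_compl_of_subset (h : K₁ ⊆ K₂) (hv₂ : v₂ ∉ K₂) :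
    CrossFree (component ends K₁ᶜ v₁) (component ends K₂ᶜ v₂) :=
  crossFree_component_of_subset (connectedOn_component _ _)
    ((component_subset hv₂).trans (Set.compl_subset_compl.2 h)) v₁

theorem MGConnected.crossFree_component_compl_of_disjoint (hconn : MGConnected ends)
    (hK₁ : ConnectedOn ends K₁) (hK₂ : ConnectedOn ends K₂) (hD : Disjoint K₁ K₂)
    (hv₁ : v₁ ∉ K₁) : CrossFree (component ends K₁ᶜ v₁) (component ends K₂ᶜ v₂) := by
  set X₁ := component ends K₁ᶜ v₁
  set X₂ := component ends K₂ᶜ v₂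
  rcases hK₂.disjoint_or_subset_component hD.symm.subset_compl_right v₁ with h₁ | hK₂X₁
  · exact (crossFree_component_of_subset (connectedOn_component _ _) h₁.subset_compl_right
      v₂).symm
  rcases hK₁.disjoint_or_subset_component hD.subset_compl_right v₂ with h₂ | hK₁X₂
  · exact crossFree_component_of_subset (connectedOn_component _ _) h₂.subset_compl_right v₁
  obtain ⟨u, hu⟩ := hK₁.1
  have hX₁X₂ : X₁ᶜ ⊆ X₂ :=
    ((hconn.connectedOn_compl_component_compl hK₁ hv₁).disjoint_or_subset_component
      (Set.compl_subset_compl.2 hK₂X₁) v₂).resolve_left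
      (Set.not_disjoint_iff.2 ⟨u, hK₁X₂ hu, fun h => component_subset hv₁ h hu⟩)
  exact Or.inr (Or.inr (Or.inr (Set.compl_subset_iff_union.1 hX₁X₂)))

theorem MGConnected.crossFree_component_compl (hconn : MGConnected ends)
    (hK₁ : ConnectedOn ends K₁) (hK₂ : ConnectedOn ends K₂) (h : Laminar K₁ K₂)
    (hv₁ : v₁ ∉ K₁) (hv₂ : v₂ ∉ K₂) :
    CrossFree (component ends K₁ᶜ v₁) (component ends K₂ᶜ v₂) := by
  rcases h with h | h | h
  · exact hconn.crossFree_component_compl_of_disjoint hK₁ hK₂ h hv₁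
  · exact crossFree_component_compl_of_subset h hv₂
  · exact (crossFree_component_compl_of_subset h hv₁).symm

variable (ends) in
def shrinkCut (U : Set V) (u v : V) : Set V :=
  component ends (component ends U u)ᶜ v

variable {U U' : Set V} {u u' v v' : V}

theorem mem_compl_component (hu : u ∈ U) (hv : v ∉ U) : v ∈ (component ends U u)ᶜ :=
  fun h => hv (component_subset hu h)

theorem cutF_shrinkCut_subset [Fintype ε] (hu : u ∈ U) (hv : v ∉ U) :
    cutF ends (shrinkCut ends U u v) ⊆ cutF ends U :=
  calc cutF ends (shrinkCut ends U u v)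
      _ ⊆ cutF ends (component ends U u)ᶜ :=
        cutF_component_subset (mem_compl_component hu hv)
      _ = cutF ends (component ends U u) := cutF_compl _
      _ ⊆ cutF ends U := cutF_component_subset hu

theorem mem_cutF_shrinkCut [Fintype ε] {e : ε} (hu : u ∈ U) (hv : v ∉ U)
    (he : ends e = s(u, v)) : e ∈ cutF ends (shrinkCut ends U u v) :=
  mem_cutF.2 ⟨v, u, he.trans Sym2.eq_swap, mem_component_self,
    fun h => component_subset (mem_compl_component hu hv) h mem_component_self⟩

theorem MGConnected.isSimpleCut_shrinkCut (hconn : MGConnected ends) (hu : u ∈ U)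
    (hv : v ∉ U) : IsSimpleCut ends (shrinkCut ends U u v) :=
  ⟨connectedOn_component _ _, hconn.connectedOn_compl_component_compl
    (connectedOn_component U u) (mem_compl_component hu hv)⟩

theorem MGConnected.crossFree_shrinkCut (hconn : MGConnected ends) (h : Laminar U U')
    (hu : u ∈ U) (hv : v ∉ U) (hu' : u' ∈ U') (hv' : v' ∉ U') :
    CrossFree (shrinkCut ends U u v) (shrinkCut ends U' u' v') :=
  hconn.crossFree_component_compl (connectedOn_component _ _) (connectedOn_component _ _)
    (h.component hu hu') (mem_compl_component hu hv) (mem_compl_component hu' hv')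

end Shrink

end

theorem stmt13_general {V ε : Type} [Fintype ε] [DecidableEq ε]
    (ends : ε → Sym2 V) (hconn : MGConnected ends)
    (J : Finset ε)
    (m : ℕ) (U : Fin m → Set V)
    (hlam : ∀ i j, Disjoint (U i) (U j) ∨ U i ⊆ U j ∨ U j ⊆ U i)
    (hJcut : ∀ i, (cutF ends (U i) ∩ J).card = 1)
    (h2 : ∀ e : ε, (Finset.univ.filter (fun i => e ∈ cutF ends (U i))).card ≤ 2) :
    ∃ W : Fin m → Set V,
      (∀ i j, Disjoint (W i) (W j) ∨ W i ⊆ W j ∨ W j ⊆ W i) ∧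
      (∀ i, IsSimpleCut ends (W i) ∧ (cutF ends (W i) ∩ J).card = 1 ∧
        cutF ends (W i) ⊆ cutF ends (U i)) ∧
      (∀ e : ε, (Finset.univ.filter (fun i => e ∈ cutF ends (W i))).card ≤ 2) := by
  obtain ⟨r, -⟩ := hconn.1
  choose e he using fun i => Finset.card_pos.1 ((hJcut i).symm ▸ Nat.one_pos)
  choose u v hends hu hv using fun i => mem_cutF.1 (Finset.mem_inter.1 (he i)).1
  set W := fun i => sideWithout r (shrinkCut ends (U i) (u i) (v i))
  have hcutW : ∀ i, cutF ends (W i) = cutF ends (shrinkCut ends (U i) (u i) (v i)) :=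
    fun i => cutF_sideWithout r _
  have hcut : ∀ i, cutF ends (W i) ⊆ cutF ends (U i) := fun i =>
    (hcutW i).trans_subset (cutF_shrinkCut_subset (hu i) (hv i))
  have heW : ∀ i, e i ∈ cutF ends (W i) ∩ J := fun i =>
    Finset.mem_inter.2 ⟨(hcutW i).symm ▸ mem_cutF_shrinkCut (hu i) (hv i) (hends i),
      (Finset.mem_inter.1 (he i)).2⟩
  refine ⟨W, fun i j => ?_, fun i => ⟨?_, ?_, hcut i⟩, fun e' => ?_⟩
  · exact ((hconn.crossFree_shrinkCut (hlam i j) (hu i) (hv i) (hu j) (hv j)).sideWithout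
      r).laminar (notMem_sideWithout r _) (notMem_sideWithout r _)
  · exact (hconn.isSimpleCut_shrinkCut (hu i) (hv i)).sideWithout r
  · exact ((Finset.card_le_card (Finset.inter_subset_inter_right (hcut i))).trans_eq
      (hJcut i)).antisymm (Finset.card_pos.2 ⟨e i, heW i⟩)
  · exact (Finset.card_le_card (Finset.monotone_filter_right _ fun i _ => @hcut i e')).trans
      (h2 e')

/-- a laminar family of cuts each containing one edge of a join `J`, and
covering every edge at most twice, can be shrunk to a laminar family of `J`-cuts
`δ(Wᵢ) ⊆ δ(Uᵢ)`; in particular every edge lies in at most two of the new cuts. -/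
theorem stmt13 {V ε : Type} [Fintype V] [DecidableEq V] [Fintype ε] [DecidableEq ε]
    (ends : ε → Sym2 V) (hconn : MGConnected ends)
    (J : Finset ε)
    (hJ : ∀ C : Finset ε, IsCycle ends C → (C ∩ J).card ≤ (C \ J).card)
    (m : ℕ) (U : Fin m → Set V)
    (hlam : ∀ i j, Disjoint (U i) (U j) ∨ U i ⊆ U j ∨ U j ⊆ U i)
    (hJcut : ∀ i, (cutF ends (U i) ∩ J).card = 1)
    (h2 : ∀ e : ε, (Finset.univ.filter (fun i => e ∈ cutF ends (U i))).card ≤ 2) :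
    ∃ W : Fin m → Set V,
      (∀ i j, Disjoint (W i) (W j) ∨ W i ⊆ W j ∨ W j ⊆ W i) ∧
      (∀ i, IsSimpleCut ends (W i) ∧ (cutF ends (W i) ∩ J).card = 1 ∧
        cutF ends (W i) ⊆ cutF ends (U i)) ∧
      (∀ e : ε, (Finset.univ.filter (fun i => e ∈ cutF ends (W i))).card ≤ 2) :=
  stmt13_general ends hconn J m U hlam hJcut h2

end
end

section
/- Let G+H be the complete graph K₄ on vertices {u,a,b,c}, where the demand set is D = {ua, ub, uc} (the star of u) and the supply set is E = {ab, bc, ca}. Then the optimum value of the nonnegative cycle LP equals 3/2 (attained by x_e = 1/2 for all e ∈ D), while every feasible NonNegativeCycles solution D' ⊆ D satisfies |D'| ≤ 1. Consequently, the integrality gap of the nonnegative cycle LP is at least 3/2 even when G+H is planar. -/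
open scoped Classical

noncomputable section

/-- `K₄` on `{u,a,b,c} = {0,1,2,3}` where the demand edges form the star at `u = 0`. -/
def k4sEnds : Fin 6 → Sym2 (Fin 4) := ![s(0,1), s(0,2), s(0,3), s(1,2), s(2,3), s(3,1)]

def k4sDem : Finset (Fin 6) := {0, 1, 2}

def k4pos (w : Fin 4) : ℝ × ℝ :=
  if w.val = 0 then (0,0) else if w.val = 1 then (1,0) else if w.val = 2 then (-1,1) else (-1,-1)

def k4arc (e : Fin 6) (t : ℝ) : ℝ × ℝ :=
  if e.val = 0 then (t, 0)
  else if e.val = 1 then (-t, t)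
  else if e.val = 2 then (-t, -t)
  else if e.val = 3 then (1-2*t, t)
  else if e.val = 4 then (-1, 1-2*t)
  else (2*t-1, t-1)

def k4A : Fin 6 → Fin 4 := ![0,0,0,1,2,3]
def k4B : Fin 6 → Fin 4 := ![1,2,3,2,3,1]

lemma k4ends_eq : ∀ (e : Fin 6) (a b : Fin 4), k4sEnds e = s(a, b) →
    (a = k4A e ∧ b = k4B e) ∨ (a = k4B e ∧ b = k4A e) := by decide

lemma k4endpoints : ∀ e : Fin 6, k4arc e 0 = k4pos (k4A e) ∧ k4arc e 1 = k4pos (k4B e) := by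
  intro e
  fin_cases e <;> norm_num [k4arc, k4pos, k4A, k4B, Prod.ext_iff, (show ((3:Fin 4):ℕ) = 3 from rfl)]

lemma k4planar : IsPlanar k4sEnds := by
  refine ⟨k4pos, k4arc, ?_, ?_, ?_, ?_, ?_, ?_⟩
  · intro a b h
    fin_cases a <;> fin_cases b <;> first
      | rfl
      | (exfalso; rw [Prod.ext_iff] at h; norm_num [k4pos] at h)
  · intro e
    apply Continuous.continuousOn
    unfold k4arc
    split_ifs <;> fun_prop
  · intro e a b h
    rcases k4ends_eq e a b h with ⟨rfl, rfl⟩ | ⟨rfl, rfl⟩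
    · exact Or.inl (k4endpoints e)
    · exact Or.inr ⟨(k4endpoints e).1, (k4endpoints e).2⟩
  · intro e s hs t ht h
    obtain ⟨hs0, hs1⟩ := hs
    obtain ⟨ht0, ht1⟩ := ht
    fin_cases e <;>
      (try norm_num [k4arc, Prod.ext_iff] at h) <;>
      first
        | linarith [h.1, h.2]
        | linarith [h]
        | linarith
  · intro e f hef s hs t ht h
    obtain ⟨hs0, hs1⟩ := hs
    obtain ⟨ht0, ht1⟩ := ht
    fin_cases e <;> fin_cases f <;>
      first
        | exact absurd rfl hef
        | ((try norm_num [k4arc, Prod.ext_iff] at h) <;>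
           first
             | linarith [h.1, h.2]
             | linarith [h]
             | linarith)
  · intro e s hs w h
    obtain ⟨hs0, hs1⟩ := hs
    fin_cases e <;> fin_cases w <;>
      (try norm_num [k4arc, k4pos, Prod.ext_iff] at h) <;>
      first
        | linarith [h.1, h.2]
        | linarith [h]
        | linarith

lemma k4noLoop : ∀ (i : Fin 6) (w : Fin 4), k4sEnds i ≠ s(w, w) := by decide

lemma k4endsInj : Function.Injective k4sEnds := by decide

lemma k4demInc : ∀ d ∈ k4sDem, (0 : Fin 4) ∈ k4sEnds d := by decide

lemma cycle_struct (C : Finset (Fin 6)) (h : IsCycle k4sEnds C) :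
    3 ≤ C.card ∧ (C ∩ k4sDem).card ≤ 2 := by
  obtain ⟨n, v, e, hv, he, hends, hC⟩ := h
  have hcard : C.card = n + 1 := by
    rw [hC]
    have h := Finset.card_image_of_injective Finset.univ he
    simp only [Finset.card_univ, Fintype.card_fin] at h
    convert h using 2
    ext x
    simp
  have hn2 : 2 ≤ n := by
    rcases n with _ | _ | n
    · exact absurd (hends 0) (by simpa using k4noLoop (e 0) (v 0))
    · have h0 := hends 0
      have h1 := hends 1
      have h01 : k4sEnds (e 0) = k4sEnds (e 1) := by
        rw [h0, h1]
        have e1 : ((1 : Fin (0+1+1)) + 1) = 0 := rfl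
        have e0 : ((0 : Fin (0+1+1)) + 1) = 1 := rfl
        rw [e1, e0, Sym2.eq_swap]
      exact absurd (he (k4endsInj h01)) (by decide)
    · omega
  constructor
  · omega
  · by_cases hz : ∃ j, v j = 0
    · obtain ⟨j, hj⟩ := hz
      have hsub : C ∩ k4sDem ⊆ {e (j - 1), e j} := by
        intro x hx
        rw [Finset.mem_inter, hC] at hx
        obtain ⟨hxC, hxD⟩ := hx
        simp only [Finset.mem_image, Finset.mem_univ, true_and] at hxC
        obtain ⟨i, rfl⟩ := hxC
        have h0 : (0 : Fin 4) ∈ k4sEnds (e i) := k4demInc _ hxD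
        rw [hends i, Sym2.mem_iff] at h0
        simp only [Finset.mem_insert, Finset.mem_singleton]
        rcases h0 with h0 | h0
        · right; exact congrArg e (hv (h0.symm.trans hj.symm))
        · left
          have hij : i + 1 = j := hv (h0.symm.trans hj.symm)
          exact congrArg e (eq_sub_iff_add_eq.mpr hij)
      calc (C ∩ k4sDem).card ≤ ({e (j - 1), e j} : Finset (Fin 6)).card :=
            Finset.card_le_card hsub
        _ ≤ 2 := Finset.card_insert_le _ _ |>.trans (by simp)
    · have : C ∩ k4sDem = ∅ := by
        rw [Finset.eq_empty_iff_forall_notMem]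
        intro x hx
        rw [Finset.mem_inter, hC] at hx
        obtain ⟨hxC, hxD⟩ := hx
        simp only [Finset.mem_image, Finset.mem_univ, true_and] at hxC
        obtain ⟨i, rfl⟩ := hxC
        have h0 : (0 : Fin 4) ∈ k4sEnds (e i) := k4demInc _ hxD
        rw [hends i, Sym2.mem_iff] at h0
        rcases h0 with h0 | h0
        · exact hz ⟨i, h0.symm⟩
        · exact hz ⟨i + 1, h0.symm⟩
      simp [this]

lemma k4cycle (C : Finset (Fin 6)) (v : Fin 3 → Fin 4) (e : Fin 3 → Fin 6)
    (hv : Function.Injective v) (he : Function.Injective e)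
    (hends : ∀ i : Fin 3, k4sEnds (e i) = s(v i, v (i + 1)))
    (hC : ∀ x, x ∈ C ↔ ∃ i, e i = x) : IsCycle k4sEnds C := by
  refine ⟨2, v, e, hv, he, hends, ?_⟩
  ext x
  rw [hC]
  simp

lemma cycleT1 : IsCycle k4sEnds {0, 3, 1} :=
  k4cycle _ ![0,1,2] ![0,3,1] (by decide) (by decide) (by decide) (by decide)

lemma cycleT2 : IsCycle k4sEnds {1, 4, 2} :=
  k4cycle _ ![0,2,3] ![1,4,2] (by decide) (by decide) (by decide) (by decide)

lemma cycleT3 : IsCycle k4sEnds {0, 5, 2} :=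
  k4cycle _ ![0,1,3] ![0,5,2] (by decide) (by decide) (by decide) (by decide)


/-- for `K₄` with the star of a vertex as demand set, the optimum value of
the nonnegative cycle LP equals `3/2` (and is attained), while every feasible
`NonNegativeCycles` solution has at most one edge; hence the integrality gap of the
nonnegative cycle LP is at least `3/2` on planar instances. -/
theorem stmt14 :
    IsPlanar k4sEnds ∧
    IsGreatest {r : ℝ | ∃ x : Fin 6 → ℝ,
        (∀ e ∈ k4sDem, 0 ≤ x e ∧ x e ≤ 1) ∧
        (∀ C : Finset (Fin 6), IsCycle k4sEnds C →
          ∑ e ∈ C ∩ k4sDem, x e ≤ ((C \ k4sDem).card : ℝ)) ∧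
        r = ∑ e ∈ k4sDem, x e} (3 / 2) ∧
    (∀ D' ⊆ k4sDem,
      (∀ C : Finset (Fin 6), IsCycle k4sEnds C → (C ∩ D').card ≤ (C \ k4sDem).card) →
      D'.card ≤ 1) := by
  refine ⟨k4planar, ⟨⟨fun _ => 1/2, ?_, ?_, ?_⟩, ?_⟩, ?_⟩
  · intro e _; norm_num
  · intro C hC
    obtain ⟨h3, h2⟩ := cycle_struct C hC
    have hsplit : (C ∩ k4sDem).card + (C \ k4sDem).card = C.card :=
      Finset.card_inter_add_card_sdiff C k4sDem
    rw [Finset.sum_const, nsmul_eq_mul]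
    have : (C ∩ k4sDem).card ≤ 2 * (C \ k4sDem).card := by omega
    have := (Nat.cast_le (α := ℝ)).mpr this
    push_cast at this
    linarith
  · rw [Finset.sum_const, show k4sDem.card = 3 from rfl]
    norm_num
  · rintro r ⟨x, hb, hcyc, rfl⟩
    have h1 := hcyc _ cycleT1
    have h2 := hcyc _ cycleT2
    have h3 := hcyc _ cycleT3
    rw [show ({0,3,1} : Finset (Fin 6)) ∩ k4sDem = {0,1} from rfl,
        show (({0,3,1} : Finset (Fin 6)) \ k4sDem).card = 1 from rfl,
        Finset.sum_pair (by decide : (0 : Fin 6) ≠ 1)] at h1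
    rw [show ({1,4,2} : Finset (Fin 6)) ∩ k4sDem = {1,2} from rfl,
        show (({1,4,2} : Finset (Fin 6)) \ k4sDem).card = 1 from rfl,
        Finset.sum_pair (by decide : (1 : Fin 6) ≠ 2)] at h2
    rw [show ({0,5,2} : Finset (Fin 6)) ∩ k4sDem = {0,2} from rfl,
        show (({0,5,2} : Finset (Fin 6)) \ k4sDem).card = 1 from rfl,
        Finset.sum_pair (by decide : (0 : Fin 6) ≠ 2)] at h3
    rw [show k4sDem = {0,1,2} from rfl, Finset.sum_insert (by decide),
        Finset.sum_insert (by decide), Finset.sum_singleton]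
    push_cast at h1 h2 h3
    linarith
  · intro D' hsub hfeas
    have hP : D' ∈ k4sDem.powerset := Finset.mem_powerset.mpr hsub
    fin_cases hP <;>
      first
        | decide
        | exact absurd (hfeas _ cycleT1) (by decide)
        | exact absurd (hfeas _ cycleT2) (by decide)
        | exact absurd (hfeas _ cycleT3) (by decide)


end
end
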